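/- Let A be a block matrix [[B, C], [0, D]] with nonnegative blocks, where C is a matrix unit (exactly one nonzero entry). If rank_+(B|C) = rank_+(B) + 1, then rank_+(A) = rank_+(B) + rank_+([[C],[D]]), where [[C],[D]] is the vertical concatenation of C and D. -/

import Mathlib

/-!
Take a minimal nonnegative factorization `A = ∑ₜ uₜ vₜᵀ` with `r = rank₊ A` terms. Since the
lower-left block of `A` vanishes, for each `t` either `uₜ` vanishes on the rows of `D` or `vₜ`
vanishes on the columns of `B`; let `S` be the set of terms whose `vₜ` meets the columns of `B`.
Then `B` is the sum of the terms in `S`, and `[C; D]` is the sum of the terms outside `S` plus the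
contribution of `S`, which is supported on the single nonzero entry `(i₀, j₀)` of `C`.

If that contribution vanishes, `rank₊ B ≤ |S|` and `rank₊ [C; D] ≤ r - |S|`. Otherwise some
`t₀ ∈ S` has `u_{t₀}` supported on row `i₀`, and the contribution of the terms outside `S` to
`C`, a multiple of the matrix unit at `(i₀, j₀)`, can be absorbed into `v_{t₀}`. So
`rank₊ (B | C) ≤ |S|`, whence `rank₊ B ≤ |S| - 1` by hypothesis, while
`rank₊ [C; D] ≤ r - |S| + 1`. The reverse inequality comes from stacking factorizations of `B`
and `[C; D]`.
-/

noncomputable def nnRank {α β : Type} [Fintype α] [Fintype β] (A : Matrix α β ℝ) : ℕ :=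
  sInf {r : ℕ | ∃ u : Fin r → α → ℝ, ∃ v : Fin r → β → ℝ,
    (∀ t i, 0 ≤ u t i) ∧ (∀ t j, 0 ≤ v t j) ∧ ∀ i j, A i j = ∑ t, u t i * v t j}

open Matrix Finset

theorem mul_eq_zero_of_eq_sum_of_eq_zero {α β T : Type} [Fintype T] {A : Matrix α β ℝ}
    {u : T → α → ℝ} {v : T → β → ℝ} (hu : ∀ t i, 0 ≤ u t i) (hv : ∀ t j, 0 ≤ v t j) {i : α} {j : β}
    (hA : A i j = ∑ t, u t i * v t j) (h : A i j = 0) (t : T) :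
    u t i * v t j = 0 :=
  (sum_eq_zero_iff_of_nonneg fun s _ => mul_nonneg (hu s i) (hv s j)).mp (hA ▸ h) t (mem_univ t)

theorem eq_mul_single_of_support {α β : Type} [DecidableEq β] {Q : Matrix α β ℝ} {i₀ : α}
    {j₀ : β} (hQ : ∀ i j, (i, j) ≠ (i₀, j₀) → Q i j = 0) {x : α → ℝ} (hx : ∀ i, i ≠ i₀ → x i = 0)
    (hx₀ : x i₀ ≠ 0) (i : α) (j : β) :
    Q i j = x i * (Pi.single j₀ (Q i₀ j₀ / x i₀) : β → ℝ) j := by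
  by_cases hi : i = i₀ <;> by_cases hj : j = j₀
  · subst hi hj; simp [mul_div_cancel₀ _ hx₀]
  all_goals rw [hQ i j (by simp [hi, hj])]; simp [hj, hx i, hi]

section Factorization

variable {α β T : Type} [Fintype α] [Fintype β]

theorem nnRank_le_card {A : Matrix α β ℝ} (s : Finset T) (u : T → α → ℝ) (v : T → β → ℝ)
    (hu : ∀ t ∈ s, ∀ i, 0 ≤ u t i) (hv : ∀ t ∈ s, ∀ j, 0 ≤ v t j)
    (hA : ∀ i j, A i j = ∑ t ∈ s, u t i * v t j) :
    nnRank A ≤ #s := by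
  let e := s.equivFin.symm
  refine Nat.sInf_le ⟨fun t => u (e t), fun t => v (e t),
    fun t => hu _ (e t).2, fun t => hv _ (e t).2, fun i j => ?_⟩
  rw [hA, ← sum_coe_sort s]
  exact (e.sum_comp fun t => u t i * v t j).symm

theorem exists_nnFactorization {A : Matrix α β ℝ} (hA : ∀ i j, 0 ≤ A i j) :
    ∃ u : Fin (nnRank A) → α → ℝ, ∃ v : Fin (nnRank A) → β → ℝ,
      (∀ t i, 0 ≤ u t i) ∧ (∀ t j, 0 ≤ v t j) ∧ ∀ i j, A i j = ∑ t, u t i * v t j := by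
  classical
  let e := (Fintype.equivFin β).symm
  refine Nat.sInf_mem (s := {r : ℕ | ∃ u : Fin r → α → ℝ, ∃ v : Fin r → β → ℝ,
    (∀ t i, 0 ≤ u t i) ∧ (∀ t j, 0 ≤ v t j) ∧ ∀ i j, A i j = ∑ t, u t i * v t j})
    ⟨_, fun t i => A i (e t), fun t j => if e t = j then 1 else 0,
      fun t i => hA _ _, fun t j => ite_nonneg zero_le_one le_rfl, fun i j => ?_⟩
  rw [e.sum_comp fun j' => A i j' * if j' = j then 1 else 0]
  simp

theorem nnRank_le_card_add_one_of_eq_sum_add_mul {A : Matrix α β ℝ} (s : Finset T)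
    (u : T → α → ℝ) (v : T → β → ℝ) (x : α → ℝ) (y : β → ℝ)
    (hu : ∀ t ∈ s, ∀ i, 0 ≤ u t i) (hv : ∀ t ∈ s, ∀ j, 0 ≤ v t j)
    (hx : 0 ≤ x) (hy : 0 ≤ y)
    (hA : ∀ i j, A i j = ∑ t ∈ s, u t i * v t j + x i * y j) :
    nnRank A ≤ #s + 1 := by
  have := nnRank_le_card (A := A) s.insertNone (fun t => t.elim x u) (fun t => t.elim y v)
    (by rintro (_ | t) ht; exacts [hx, hu t (by simpa using ht)])
    (by rintro (_ | t) ht; exacts [hy, hv t (by simpa using ht)])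
    (by simp [sum_insertNone, hA, add_comm])
  rwa [card_insertNone] at this

theorem nnRank_le_card_of_eq_sum_add_mul_of_mem {A : Matrix α β ℝ}
    (s : Finset T) (u : T → α → ℝ) (v : T → β → ℝ) (w : β → ℝ) {t₀ : T} (ht₀ : t₀ ∈ s)
    (hu : ∀ t ∈ s, ∀ i, 0 ≤ u t i) (hv : ∀ t ∈ s, ∀ j, 0 ≤ v t j) (hw : 0 ≤ w)
    (hA : ∀ i j, A i j = ∑ t ∈ s, u t i * v t j + u t₀ i * w j) :
    nnRank A ≤ #s := by
  classical
  exact nnRank_le_card s u (fun t j => v t j + if t = t₀ then w j else 0) hu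
    (fun t ht j => add_nonneg (hv t ht j) (ite_nonneg (hw j) le_rfl))
    (by simp [hA, mul_add, sum_add_distrib, ht₀])

end Factorization

section BlockMatrix

variable {α₁ α₂ β₁ β₂ T : Type} {B : Matrix α₁ β₁ ℝ} {C : Matrix α₁ β₂ ℝ} {D : Matrix α₂ β₂ ℝ}

theorem nnRank_fromBlocks_zero_le [Fintype α₁] [Fintype α₂] [Fintype β₁] [Fintype β₂]
    (hB : ∀ i j, 0 ≤ B i j) (hC : ∀ i j, 0 ≤ C i j) (hD : ∀ i j, 0 ≤ D i j) :
    nnRank (fromBlocks B C 0 D) ≤ nnRank B + nnRank (fromRows C D) := by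
  obtain ⟨u, v, hu, hv, hB'⟩ := exists_nnFactorization hB
  obtain ⟨u', v', hu', hv', hCD⟩ := exists_nnFactorization (A := fromRows C D)
    (by rintro (i | i) j; exacts [hC i j, hD i j])
  have := nnRank_le_card (A := fromBlocks B C 0 D) univ
    (Sum.elim (fun t => Sum.elim (u t) 0) u')
    (Sum.elim (fun t => Sum.elim (v t) 0) (fun t => Sum.elim 0 (v' t)))
    (by rintro (t | t) - (i | i) <;> simp [hu, hu'])
    (by rintro (t | t) - (j | j) <;> simp [hv, hv'])
    (by rintro (i | i) (j | j) <;> simp [Fintype.sum_sum_type, hB', ← hCD])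
  simpa using this

variable {u : T → α₁ ⊕ α₂ → ℝ} {v : T → β₁ ⊕ β₂ → ℝ} {S : Finset T}

theorem nnRank_le_card_of_fromBlocks_eq_sum [Fintype T] [Fintype α₁] [Fintype β₁]
    (hu : ∀ t k, 0 ≤ u t k) (hv : ∀ t l, 0 ≤ v t l)
    (hf : ∀ k l, fromBlocks B C 0 D k l = ∑ t, u t k * v t l)
    (hS : ∀ t ∉ S, ∀ j, v t (.inl j) = 0) :
    nnRank B ≤ #S := by
  refine nnRank_le_card S (fun t i => u t (.inl i)) (fun t j => v t (.inl j))
    (fun t _ i => hu t _) (fun t _ j => hv t _) fun i j => ?_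
  rw [← fromBlocks_apply₁₁ B C 0 D, hf]
  exact (sum_subset (subset_univ S) fun t _ ht => by rw [hS t ht, mul_zero]).symm

theorem nnRank_fromCols_le_card_of_fromBlocks_eq_sum [Fintype T] [Fintype α₁] [Fintype β₁]
    [Fintype β₂] (hu : ∀ t k, 0 ≤ u t k) (hv : ∀ t l, 0 ≤ v t l)
    (hf : ∀ k l, fromBlocks B C 0 D k l = ∑ t, u t k * v t l)
    (hS : ∀ t ∉ S, ∀ j, v t (.inl j) = 0) {i₀ : α₁} {j₀ : β₂}
    (hC : ∀ t i j, (i, j) ≠ (i₀, j₀) → u t (.inl i) * v t (.inr j) = 0)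
    {t₀ : T} (ht₀ : t₀ ∈ S) (h₀ : u t₀ (.inl i₀) * v t₀ (.inr j₀) ≠ 0) :
    nnRank (fromCols B C) ≤ #S := by
  classical
  let R : Matrix α₁ (β₁ ⊕ β₂) ℝ := fun i l => ∑ t ∈ Sᶜ, u t (.inl i) * v t l
  have hR : ∀ i l, (i, l) ≠ (i₀, .inr j₀) → R i l = 0 := by
    rintro i (j | j) hij
    · exact sum_eq_zero fun t ht => by rw [hS t (mem_compl.mp ht), mul_zero]
    · exact sum_eq_zero fun t _ => hC t i j (by simpa using hij)
  have hx : ∀ i, i ≠ i₀ → u t₀ (.inl i) = 0 := fun i hi =>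
    (mul_eq_zero.mp (hC t₀ i j₀ (by simp [hi]))).resolve_right (right_ne_zero_of_mul h₀)
  have hR₀ : 0 ≤ R i₀ (.inr j₀) := sum_nonneg fun t _ => mul_nonneg (hu t _) (hv t _)
  refine nnRank_le_card_of_eq_sum_add_mul_of_mem S (fun t i => u t (.inl i)) v
    (Pi.single (.inr j₀) (R i₀ (.inr j₀) / u t₀ (.inl i₀))) ht₀
    (fun t _ i => hu t _) (fun t _ l => hv t l) (Pi.single_nonneg.mpr (div_nonneg hR₀ (hu t₀ _)))
    fun i l => ?_
  calc fromCols B C i l = ∑ t, u t (.inl i) * v t l := by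
        rw [← hf, ← fromRows_fromCols_eq_fromBlocks, fromRows_apply_inl]
    _ = ∑ t ∈ S, u t (.inl i) * v t l + R i l := (sum_add_sum_compl S _).symm
    _ = _ := by rw [eq_mul_single_of_support hR hx (left_ne_zero_of_mul h₀) i l]

theorem mul_eq_zero_of_mem_of_ne (huS : ∀ t ∈ S, ∀ i, u t (.inr i) = 0) {i₀ : α₁} {j₀ : β₂}
    (hC : ∀ t i j, (i, j) ≠ (i₀, j₀) → u t (.inl i) * v t (.inr j) = 0) {t : T} (ht : t ∈ S)
    {k : α₁ ⊕ α₂} {j : β₂} (hkj : (k, j) ≠ (.inl i₀, j₀)) :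
    u t k * v t (.inr j) = 0 := by
  rcases k with i | i
  · exact hC t i j (by simpa using hkj)
  · rw [huS t ht i, zero_mul]

theorem fromRows_apply_eq_sum_add_sum_compl [Fintype T] [DecidableEq T]
    (hf : ∀ k l, fromBlocks B C 0 D k l = ∑ t, u t k * v t l) (k : α₁ ⊕ α₂) (j : β₂) :
    fromRows C D k j = ∑ t ∈ Sᶜ, u t k * v t (.inr j) + ∑ t ∈ S, u t k * v t (.inr j) := by
  rw [add_comm, sum_add_sum_compl, ← hf, ← fromCols_fromRows_eq_fromBlocks, fromCols_apply_inr]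

theorem nnRank_fromRows_le_card_compl [Fintype T] [DecidableEq T] [Fintype α₁] [Fintype α₂]
    [Fintype β₂] (hu : ∀ t k, 0 ≤ u t k) (hv : ∀ t l, 0 ≤ v t l)
    (hf : ∀ k l, fromBlocks B C 0 D k l = ∑ t, u t k * v t l)
    (huS : ∀ t ∈ S, ∀ i, u t (.inr i) = 0) {i₀ : α₁} {j₀ : β₂}
    (hC : ∀ t i j, (i, j) ≠ (i₀, j₀) → u t (.inl i) * v t (.inr j) = 0)
    (hS : ∀ t ∈ S, u t (.inl i₀) * v t (.inr j₀) = 0) :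
    nnRank (fromRows C D) ≤ #Sᶜ := by
  refine nnRank_le_card Sᶜ u (fun t j => v t (.inr j)) (fun t _ k => hu t k)
    (fun t _ j => hv t _) fun k j => ?_
  rw [fromRows_apply_eq_sum_add_sum_compl hf, add_eq_left]
  refine sum_eq_zero fun t ht => ?_
  by_cases hkj : (k, j) = (.inl i₀, j₀)
  · obtain ⟨rfl, rfl⟩ := Prod.mk.inj hkj
    exact hS t ht
  · exact mul_eq_zero_of_mem_of_ne huS hC ht hkj

theorem nnRank_fromRows_le_card_compl_add_one [Fintype T] [DecidableEq T] [Fintype α₁]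
    [Fintype α₂] [Fintype β₂] (hu : ∀ t k, 0 ≤ u t k) (hv : ∀ t l, 0 ≤ v t l)
    (hf : ∀ k l, fromBlocks B C 0 D k l = ∑ t, u t k * v t l)
    (huS : ∀ t ∈ S, ∀ i, u t (.inr i) = 0) {i₀ : α₁} {j₀ : β₂}
    (hC : ∀ t i j, (i, j) ≠ (i₀, j₀) → u t (.inl i) * v t (.inr j) = 0) :
    nnRank (fromRows C D) ≤ #Sᶜ + 1 := by
  classical
  let P : Matrix (α₁ ⊕ α₂) β₂ ℝ := fun k j => ∑ t ∈ S, u t k * v t (.inr j)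
  have hP : ∀ k j, (k, j) ≠ (.inl i₀, j₀) → P k j = 0 := fun k j hkj =>
    sum_eq_zero fun t ht => mul_eq_zero_of_mem_of_ne huS hC ht hkj
  have hx : ∀ k, k ≠ .inl i₀ → (Pi.single (.inl i₀) 1 : α₁ ⊕ α₂ → ℝ) k = 0 :=
    fun k hk => Pi.single_eq_of_ne hk 1
  have hPsum : ∀ k j, P k j =
      (Pi.single (.inl i₀) 1 : α₁ ⊕ α₂ → ℝ) k * (Pi.single j₀ (P (.inl i₀) j₀) : β₂ → ℝ) j := by
    simpa using eq_mul_single_of_support hP hx (by simp)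
  have hP₀ : 0 ≤ P (.inl i₀) j₀ := sum_nonneg fun t _ => mul_nonneg (hu t _) (hv t _)
  refine nnRank_le_card_add_one_of_eq_sum_add_mul Sᶜ u (fun t j => v t (.inr j))
    (Pi.single (.inl i₀) 1) (Pi.single j₀ (P (.inl i₀) j₀))
    (fun t _ k => hu t k) (fun t _ j => hv t _) (Pi.single_nonneg.mpr zero_le_one)
    (Pi.single_nonneg.mpr hP₀) fun k j => ?_
  rw [fromRows_apply_eq_sum_add_sum_compl hf]
  exact congrArg _ (hPsum k j)

theorem le_nnRank_fromBlocks_zero_of_single [Fintype α₁] [Fintype α₂] [Fintype β₁]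
    [Fintype β₂] (hB : ∀ i j, 0 ≤ B i j) (hC : ∀ i j, 0 ≤ C i j) (hD : ∀ i j, 0 ≤ D i j)
    {i₀ : α₁} {j₀ : β₂} (hC₀ : ∀ i j, (i, j) ≠ (i₀, j₀) → C i j = 0)
    (h : nnRank (fromCols B C) = nnRank B + 1) :
    nnRank B + nnRank (fromRows C D) ≤ nnRank (fromBlocks B C 0 D) := by
  classical
  obtain ⟨u, v, hu, hv, hf⟩ := exists_nnFactorization (A := fromBlocks B C 0 D)
    (by rintro (i | i) (j | j) <;> simp [hB, hC, hD])
  have hCterm : ∀ t i j, (i, j) ≠ (i₀, j₀) → u t (.inl i) * v t (.inr j) = 0 :=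
    fun t i j hij => mul_eq_zero_of_eq_sum_of_eq_zero hu hv (hf (.inl i) (.inr j))
      (by rw [fromBlocks_apply₁₂, hC₀ i j hij]) t
  let S : Finset (Fin _) := {t | ∃ j, v t (.inl j) ≠ 0}
  have hvS : ∀ t ∉ S, ∀ j, v t (.inl j) = 0 := by simp [S]
  have huS : ∀ t ∈ S, ∀ i, u t (.inr i) = 0 := by
    intro t ht i
    obtain ⟨j, hj⟩ : ∃ j, v t (.inl j) ≠ 0 := by simpa [S] using ht
    exact (mul_eq_zero.mp (mul_eq_zero_of_eq_sum_of_eq_zero hu hv (hf (.inr i) (.inl j))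
      (by simp) t)).resolve_right hj
  have hB_le := nnRank_le_card_of_fromBlocks_eq_sum hu hv hf hvS
  have hcard : #S + #Sᶜ = nnRank (fromBlocks B C 0 D) := by simp
  by_cases hS : ∀ t ∈ S, u t (.inl i₀) * v t (.inr j₀) = 0
  · have := nnRank_fromRows_le_card_compl hu hv hf huS hCterm hS
    omega
  · push Not at hS
    obtain ⟨t₀, ht₀, h₀⟩ := hS
    have := nnRank_fromCols_le_card_of_fromBlocks_eq_sum hu hv hf hvS hCterm ht₀ h₀
    have := nnRank_fromRows_le_card_compl_add_one hu hv hf huS hCterm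
    omega

end BlockMatrix

theorem stmt_2 {m1 m2 n1 n2 : ℕ}
    (B : Matrix (Fin m1) (Fin n1) ℝ) (C : Matrix (Fin m1) (Fin n2) ℝ)
    (D : Matrix (Fin m2) (Fin n2) ℝ)
    (hB : ∀ i j, 0 ≤ B i j) (hC : ∀ i j, 0 ≤ C i j) (hD : ∀ i j, 0 ≤ D i j)
    (hunit : ∃ i0 j0, C i0 j0 ≠ 0 ∧ ∀ i j, (i, j) ≠ (i0, j0) → C i j = 0)
    (h : nnRank (Matrix.fromCols B C) = nnRank B + 1) :
    nnRank (Matrix.fromBlocks B C 0 D) = nnRank B + nnRank (Matrix.fromRows C D) := by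
  obtain ⟨i₀, j₀, -, hC₀⟩ := hunit
  exact (nnRank_fromBlocks_zero_le hB hC hD).antisymm
    (le_nnRank_fromBlocks_zero_of_single hB hC hD hC₀ h)
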